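/- arXiv:0904.2492 — 7 statements merged into one kernel-verified Lean document; each statement's English description precedes it below -/
import Mathlib

section
/- Let V, τ, h, χ, Θ be as above. Then for every m ∈ (0,1], Θ(m) is the unique solution x ∈ (0,1] of the fixed point equation x = χ(−τ(x), m), i.e., x = h⁻¹(h(m)e^{−τ(x)}). -/
/-!
With `I x = ∫_{(x,1]} 1/V`, so that `h = exp (-I)` on `(0,1]`, the equation `x = χ (-τ x) m` is
equivalent to `I x - τ x = I m`. Splitting `I (Θ m)` at `m` shows that `Θ m` solves it, and
`x ↦ I x - τ x` is strictly decreasing on `(0,1]`, its derivative being `-(1/V + τ') < 0`.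
-/

open Set Real MeasureTheory

section IocIntegral

variable {f : ℝ → ℝ} {a b c : ℝ}

theorem setIntegral_Ioc_add_setIntegral_Ioc (hab : a ≤ b) (hbc : b ≤ c)
    (hf₁ : IntegrableOn f (Ioc a b)) (hf₂ : IntegrableOn f (Ioc b c)) :
    (∫ s in Ioc a b, f s) + ∫ s in Ioc b c, f s = ∫ s in Ioc a c, f s := by
  rw [← Ioc_union_Ioc_eq_Ioc hab hbc,
    setIntegral_union (Ioc_disjoint_Ioc_of_le le_rfl) measurableSet_Ioc hf₁ hf₂]

theorem ContinuousOn.integrableOn_Ioc_of_subset (hf : ContinuousOn f (Ioc a b)) {x y : ℝ}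
    (hx : a < x) (hy : y ≤ b) : IntegrableOn f (Ioc x y) :=
  ((hf.mono (Icc_subset_Ioc hx hy)).integrableOn_Icc).mono_set Ioc_subset_Icc_self

theorem strictAntiOn_setIntegral_Ioc_sub {g : ℝ → ℝ} (hf : ContinuousOn f (Ioc a b))
    (hg : DifferentiableOn ℝ g (Ioc a b)) (hfg : ∀ x ∈ Ioo a b, 0 < deriv g x + f x) :
    StrictAntiOn (fun x => (∫ s in Ioc x b, f s) - g x) (Ioc a b) := by
  intro x hx y hy hxy
  -- `f` need not be integrable near `a`, so argue on `[x, b]`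
  have hsub : Icc x b ⊆ Ioc a b := Icc_subset_Ioc hx.1 le_rfl
  have heq : EqOn (fun u => (∫ s in u..b, f s) - g u)
      (fun u => (∫ s in Ioc u b, f s) - g u) (Icc x b) := fun u hu => by
    simp only [intervalIntegral.integral_of_le hu.2]
  refine strictAntiOn_of_deriv_neg (f := fun u => (∫ s in Ioc u b, f s) - g u) (convex_Icc x b)
    ?_ ?_ ⟨le_rfl, hx.2⟩ ⟨hxy.le, hy.2⟩ hxy
  · refine ContinuousOn.congr ?_ heq.symm
    refine ContinuousOn.sub ?_ (hg.continuousOn.mono hsub)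
    rw [← uIcc_of_le hx.2]
    exact intervalIntegral.continuousOn_primitive_interval_left
      (by rw [uIcc_of_le hx.2]; exact (hf.mono hsub).integrableOn_Icc)
  · intro z hz
    rw [interior_Icc] at hz
    have hz' : z ∈ Ioo a b := ⟨hx.1.trans_le hz.1.le, hz.2⟩
    have hF : HasDerivAt (fun u => (∫ s in u..b, f s) - g u) (-f z - deriv g z) z := by
      refine HasDerivAt.sub ?_ (hg.differentiableAt (Ioc_mem_nhds hz'.1 hz'.2)).hasDerivAt
      refine intervalIntegral.integral_hasDerivAt_left ?_ ?_ ?_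
      · exact (intervalIntegrable_iff_integrableOn_Ioc_of_le hz.2.le).2
          (hf.integrableOn_Ioc_of_subset hz'.1 le_rfl)
      · exact (hf.mono Ioo_subset_Ioc_self).stronglyMeasurableAtFilter isOpen_Ioo z hz'
      · exact (hf.mono Ioo_subset_Ioc_self).continuousAt (Ioo_mem_nhds hz'.1 hz'.2)
    rw [(hF.congr_of_eventuallyEq (heq.eventuallyEq_of_mem (Icc_mem_nhds hz.1 hz.2)).symm).deriv]
    linarith [hfg z hz']

end IocIntegral

theorem eq_iff_apply_eq_of_leftInvOn_of_rightInvOn {α β : Type*} {f : α → β} {f' : β → α}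
    {s : Set α} {t : Set β} (hl : LeftInvOn f' f s) (hr : RightInvOn f' f t) {x : α} {y : β}
    (hx : x ∈ s) (hy : y ∈ t) :
    x = f' y ↔ f x = y :=
  ⟨fun h => h ▸ hr hy, fun h => h ▸ (hl hx).symm⟩

theorem mul_exp_neg_mem_Icc {y t : ℝ} (hy : y ∈ Icc (0 : ℝ) 1) (ht : 0 ≤ t) :
    y * exp (-t) ∈ Icc (0 : ℝ) 1 :=
  ⟨by have := hy.1; positivity,
    mul_le_one₀ hy.2 (exp_pos _).le (exp_le_one_iff.2 (neg_nonpos.2 ht))⟩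

theorem eq_inv_mul_exp_neg_iff {h hinv I : ℝ → ℝ}
    (hh : ∀ m ∈ Ioc (0:ℝ) 1, h m = exp (-I m))
    (hmaps : MapsTo h (Icc 0 1) (Icc 0 1))
    (hleft : LeftInvOn hinv h (Icc 0 1)) (hright : RightInvOn hinv h (Icc 0 1))
    {x m t : ℝ} (hx : x ∈ Ioc (0:ℝ) 1) (hm : m ∈ Ioc (0:ℝ) 1) (ht : 0 ≤ t) :
    x = hinv (h m * exp (-t)) ↔ I x - t = I m := by
  rw [eq_iff_apply_eq_of_leftInvOn_of_rightInvOn hleft hright (Ioc_subset_Icc_self hx)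
    (mul_exp_neg_mem_Icc (hmaps (Ioc_subset_Icc_self hm)) ht), hh x hx, hh m hm, ← exp_add,
    exp_eq_exp]
  constructor <;> intro <;> linarith

theorem theta_fixed_point_general
    (V : ℝ → ℝ)
    (hV : ContDiffOn ℝ 1 V (Icc 0 1))
    (hVpos : ∀ m ∈ Ioc (0:ℝ) 1, 0 < V m)
    (τ : ℝ → ℝ)
    (hτpos : ∀ m ∈ Icc (0:ℝ) 1, 0 < τ m)
    (hτC1 : ContDiffOn ℝ 1 τ (Ioc 0 1))
    (hτ' : ∀ m ∈ Ioc (0:ℝ) 1, deriv τ m + 1 / V m > 0)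
    (h hinv : ℝ → ℝ)
    (hh : ∀ m ∈ Ioc (0:ℝ) 1, h m = Real.exp (-(∫ s in Ioc m 1, 1 / V s)))
    (hmaps : ∀ m ∈ Icc (0:ℝ) 1, h m ∈ Icc (0:ℝ) 1)
    (hleft : ∀ m ∈ Icc (0:ℝ) 1, hinv (h m) = m)
    (hright : ∀ y ∈ Icc (0:ℝ) 1, h (hinv y) = y)
    (χ : ℝ → ℝ → ℝ)
    (hχ : ∀ s ≤ (0:ℝ), ∀ m ∈ Icc (0:ℝ) 1, χ s m = hinv (h m * Real.exp s))
    (Θ : ℝ → ℝ)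
    (hΘ : ∀ m ∈ Ioc (0:ℝ) 1, Θ m ∈ Ioo 0 m ∧ (∫ s in Ioc (Θ m) m, 1 / V s) = τ (Θ m)) :
    ∀ m ∈ Ioc (0:ℝ) 1,
      Θ m = χ (-τ (Θ m)) m ∧
      (∀ x ∈ Ioc (0:ℝ) 1, x = χ (-τ x) m → x = Θ m) := by
  intro m hm
  obtain ⟨⟨hΘ0, hΘm⟩, hΘeq⟩ := hΘ m hm
  have hΘ1 : Θ m ∈ Ioc (0:ℝ) 1 := ⟨hΘ0, hΘm.le.trans hm.2⟩
  have hcont : ContinuousOn (fun s => 1 / V s) (Ioc 0 1) :=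
    continuousOn_const.div (hV.continuousOn.mono Ioc_subset_Icc_self) fun s hs => (hVpos s hs).ne'
  have fix_iff : ∀ x ∈ Ioc (0:ℝ) 1,
      x = χ (-τ x) m ↔ (∫ s in Ioc x 1, 1 / V s) - τ x = ∫ s in Ioc m 1, 1 / V s := by
    intro x hx
    have hτx := (hτpos x (Ioc_subset_Icc_self hx)).le
    rw [hχ _ (neg_nonpos.2 hτx) m (Ioc_subset_Icc_self hm)]
    exact eq_inv_mul_exp_neg_iff (I := fun x => ∫ s in Ioc x 1, 1 / V s)
      hh hmaps hleft hright hx hm hτx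
  have hΘfix : Θ m = χ (-τ (Θ m)) m := by
    rw [fix_iff _ hΘ1, ← setIntegral_Ioc_add_setIntegral_Ioc hΘm.le hm.2
      (hcont.integrableOn_Ioc_of_subset hΘ0 hm.2) (hcont.integrableOn_Ioc_of_subset hm.1 le_rfl),
      hΘeq, add_sub_cancel_left]
  have hanti := strictAntiOn_setIntegral_Ioc_sub hcont (hτC1.differentiableOn one_ne_zero)
    fun z hz => hτ' z (Ioo_subset_Ioc_self hz)
  exact ⟨hΘfix, fun x hx hfix =>
    hanti.injOn hx hΘ1 (((fix_iff x hx).1 hfix).trans ((fix_iff _ hΘ1).1 hΘfix).symm)⟩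

/-- For every `m ∈ (0,1]`, `Θ m` is the unique solution `x ∈ (0,1]`
of the fixed point equation `x = χ (−τ x) m`, i.e. `x = h⁻¹ (h m * e^{−τ x})`. -/
theorem theta_fixed_point
    (V : ℝ → ℝ)
    (hV : ContDiffOn ℝ 1 V (Icc 0 1))
    (hVpos : ∀ m ∈ Ioc (0:ℝ) 1, 0 < V m)
    (hV0 : V 0 = 0)
    (hdiv : ∀ m ∈ Ioc (0:ℝ) 1, ¬ MeasureTheory.IntegrableOn (fun s => 1 / V s) (Ioc 0 m))
    (τ : ℝ → ℝ)
    (hτcont : ContinuousOn τ (Icc 0 1))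
    (hτpos : ∀ m ∈ Icc (0:ℝ) 1, 0 < τ m)
    (hτC1 : ContDiffOn ℝ 1 τ (Ioc 0 1))
    (hτ' : ∀ m ∈ Ioc (0:ℝ) 1, deriv τ m + 1 / V m > 0)
    (h hinv : ℝ → ℝ)
    (hh : ∀ m ∈ Ioc (0:ℝ) 1, h m = Real.exp (-(∫ s in Ioc m 1, 1 / V s)))
    (hh0 : h 0 = 0)
    (hmaps : ∀ m ∈ Icc (0:ℝ) 1, h m ∈ Icc (0:ℝ) 1)
    (hleft : ∀ m ∈ Icc (0:ℝ) 1, hinv (h m) = m)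
    (hright : ∀ y ∈ Icc (0:ℝ) 1, h (hinv y) = y)
    (χ : ℝ → ℝ → ℝ)
    (hχ : ∀ s ≤ (0:ℝ), ∀ m ∈ Icc (0:ℝ) 1, χ s m = hinv (h m * Real.exp s))
    (Θ : ℝ → ℝ)
    (hΘ : ∀ m ∈ Ioc (0:ℝ) 1, Θ m ∈ Ioo 0 m ∧ (∫ s in Ioc (Θ m) m, 1 / V s) = τ (Θ m)) :
    ∀ m ∈ Ioc (0:ℝ) 1,
      Θ m = χ (-τ (Θ m)) m ∧
      (∀ x ∈ Ioc (0:ℝ) 1, x = χ (-τ x) m → x = Θ m) :=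
  theta_fixed_point_general V hV hVpos τ hτpos hτC1 hτ' h hinv hh hmaps hleft hright χ hχ Θ hΘ
end

section
/- With the hypotheses above, the function Θ : (0,1] → (0,1] is strictly increasing, continuously differentiable on (0,1], satisfies 0 < Θ(m) < m for all m ∈ (0,1], and lim_{m→0⁺} Θ(m) = 0. -/
/-!
With `F u = ∫₁ᵘ 1/V` and `G = τ + F`, the equation defining `Θ` reads `G (Θ m) = F m`.
Both `F` and `G` are strictly increasing on `(0,1]`, with derivatives `1/V` and `τ' + 1/V`,
so `Θ = G⁻¹ ∘ F` is strictly increasing, and implicit differentiation gives the continuous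
derivative `Θ' = (1/V) / ((τ' + 1/V) ∘ Θ)`. The limit at `0` is squeezed by `0 < Θ m < m`.
-/

open Set Filter intervalIntegral Topology

section Primitive

variable {E : Type*} [NormedAddCommGroup E] [NormedSpace ℝ E]
  {f : ℝ → E} {s : Set ℝ} {a b c x y : ℝ}

theorem hasStrictDerivAt_integral_of_continuousOn [CompleteSpace E] (hs : s.OrdConnected)
    (hf : ContinuousOn f s) (hc : c ∈ s) (hx : x ∈ interior s) :
    HasStrictDerivAt (fun u => ∫ t in c..u, f t) (f x) x :=
  integral_hasStrictDerivAt_right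
    ((hf.mono (hs.uIcc_subset hc (interior_subset hx))).intervalIntegrable)
    ((hf.mono interior_subset).stronglyMeasurableAtFilter isOpen_interior x hx)
    (hf.continuousAt (mem_interior_iff_mem_nhds.1 hx))

theorem hasDerivWithinAt_integral_Ioc [CompleteSpace E] (hf : ContinuousOn f (Ioc a b))
    (hc : c ∈ Ioc a b) (hx : x ∈ Ioc a b) :
    HasDerivWithinAt (fun u => ∫ t in c..u, f t) (f x) (Ioc a b) x := by
  obtain ⟨a', ha', ha'x⟩ := exists_between hx.1
  have hsub : Icc a' b ⊆ Ioc a b := fun y hy => ⟨ha'.trans_le hy.1, hy.2⟩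
  have : Fact (x ∈ Icc a' b) := ⟨⟨ha'x.le, hx.2⟩⟩
  have hderiv := integral_hasDerivWithinAt_right (s := Icc a' b) (t := Icc a' b)
    ((hf.mono (ordConnected_Ioc.uIcc_subset hc hx)).intervalIntegrable)
    ((hf.mono hsub).stronglyMeasurableAtFilter_nhdsWithin measurableSet_Icc x)
    (hf.mono hsub x this.out)
  exact hderiv.mono_of_mem_nhdsWithin
    (mem_nhdsWithin.2 ⟨Ioi a', isOpen_Ioi, ha'x, fun y hy => ⟨hy.1.le, hy.2.2⟩⟩)

theorem continuousOn_integral_Ioc [CompleteSpace E] (hf : ContinuousOn f (Ioc a b))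
    (hc : c ∈ Ioc a b) : ContinuousOn (fun u => ∫ t in c..u, f t) (Ioc a b) :=
  fun _ hx => (hasDerivWithinAt_integral_Ioc hf hc hx).continuousWithinAt

theorem setIntegral_Ioc_eq_integral_sub_integral (hf : ContinuousOn f (Ioc a b))
    (hc : c ∈ Ioc a b) (hx : x ∈ Ioc a b) (hy : y ∈ Ioc a b) (hxy : x ≤ y) :
    ∫ t in Ioc x y, f t = (∫ t in c..y, f t) - ∫ t in c..x, f t := by
  rw [← integral_of_le hxy, integral_interval_sub_left]
  exacts [(hf.mono (ordConnected_Ioc.uIcc_subset hc hy)).intervalIntegrable,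
    (hf.mono (ordConnected_Ioc.uIcc_subset hc hx)).intervalIntegrable]

end Primitive

theorem strictMonoOn_Ioc_of_hasDerivAt {g g' : ℝ → ℝ} {a b : ℝ}
    (hg : ContinuousOn g (Ioc a b))
    (hg' : ∀ x ∈ Ioo a b, HasDerivAt g (g' x) x) (hpos : ∀ x ∈ Ioo a b, 0 < g' x) :
    StrictMonoOn g (Ioc a b) := by
  refine strictMonoOn_of_hasDerivWithinAt_pos (convex_Ioc a b) hg (f' := g') ?_ ?_ <;>
    rw [interior_Ioc]
  exacts [fun x hx => (hg' x hx).hasDerivWithinAt, hpos]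

section AddIntegral

variable {f τ : ℝ → ℝ} {a b c x : ℝ}

theorem hasStrictDerivAt_add_integral (hτ : ContDiffOn ℝ 1 τ (Ioc a b))
    (hf : ContinuousOn f (Ioc a b)) (hc : c ∈ Ioc a b) (hx : x ∈ Ioo a b) :
    HasStrictDerivAt (fun u => τ u + ∫ t in c..u, f t) (deriv τ x + f x) x :=
  ((hτ.contDiffAt (Ioc_mem_nhds hx.1 hx.2)).hasStrictDerivAt one_ne_zero).add
    (hasStrictDerivAt_integral_of_continuousOn ordConnected_Ioc hf hc (by rwa [interior_Ioc]))

theorem strictMonoOn_add_integral (hτ : ContDiffOn ℝ 1 τ (Ioc a b))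
    (hf : ContinuousOn f (Ioc a b)) (hc : c ∈ Ioc a b)
    (hpos : ∀ x ∈ Ioo a b, 0 < deriv τ x + f x) :
    StrictMonoOn (fun u => τ u + ∫ t in c..u, f t) (Ioc a b) :=
  strictMonoOn_Ioc_of_hasDerivAt (hτ.continuousOn.add (continuousOn_integral_Ioc hf hc))
    (fun _ hx => (hasStrictDerivAt_add_integral hτ hf hc hx).hasDerivAt) hpos

theorem strictMonoOn_integral (hf : ContinuousOn f (Ioc a b)) (hc : c ∈ Ioc a b)
    (hpos : ∀ x ∈ Ioo a b, 0 < f x) :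
    StrictMonoOn (fun u => ∫ t in c..u, f t) (Ioc a b) := by
  simpa using strictMonoOn_add_integral contDiffOn_const hf hc (τ := 0) (by simpa using hpos)

end AddIntegral

theorem StrictMonoOn.of_comp {α β γ : Type*} [Preorder α] [LinearOrder β] [Preorder γ]
    {g : β → γ} {θ : α → β} {s : Set α} {t : Set β} (hg : StrictMonoOn g t)
    (hθ : MapsTo θ s t) (hgθ : StrictMonoOn (g ∘ θ) s) : StrictMonoOn θ s :=
  fun _ hx _ hy hxy => (hg.lt_iff_lt (hθ hx) (hθ hy)).1 (hgθ hx hy hxy)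

theorem contDiffOn_one_of_hasDerivWithinAt {𝕜 F : Type*} [NontriviallyNormedField 𝕜]
    [NormedAddCommGroup F] [NormedSpace 𝕜 F] {f f' : 𝕜 → F} {s : Set 𝕜}
    (hs : UniqueDiffOn 𝕜 s) (hf : ∀ x ∈ s, HasDerivWithinAt f (f' x) s x)
    (hf' : ContinuousOn f' s) : ContDiffOn 𝕜 1 f s :=
  (contDiffOn_one_iff_derivWithin hs).2 ⟨fun x hx => (hf x hx).differentiableWithinAt,
    hf'.congr fun x hx => (hf x hx).derivWithin (hs x hx)⟩

/-- Implicit differentiation: near `x`, `θ = φ ∘ f` for the local inverse `φ` of `g` given by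
the inverse function theorem, since `g` is injective on `t`. -/
theorem HasStrictDerivAt.hasDerivWithinAt_of_comp_eqOn {g θ f : ℝ → ℝ} {g' f' x : ℝ}
    {s t : Set ℝ} (hg : HasStrictDerivAt g g' (θ x)) (hg' : g' ≠ 0) (hinj : InjOn g t)
    (ht : t ∈ 𝓝 (θ x)) (hf : HasDerivWithinAt f f' s x) (hθ : MapsTo θ s t)
    (hgθ : EqOn (g ∘ θ) f s) (hx : x ∈ s) :
    HasDerivWithinAt θ (f' / g') s x := by
  set φ := hg.localInverse g g' (θ x) hg'
  have hφ : HasStrictDerivAt φ g'⁻¹ (g (θ x)) := hg.to_localInverse hg'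
  have hφθ : φ (g (θ x)) = θ x := (hg.hasStrictFDerivAt_equiv hg').localInverse_apply_image
  have hfx : Tendsto f (𝓝[s] x) (𝓝 (g (θ x))) := by
    have := hf.continuousWithinAt
    rwa [ContinuousWithinAt, ← hgθ hx] at this
  have hright : ∀ᶠ y in 𝓝[s] x, g (φ (f y)) = f y :=
    hfx.eventually (hg.eventually_right_inverse hg')
  have hmem : ∀ᶠ y in 𝓝[s] x, φ (f y) ∈ t := by
    have := hφ.hasDerivAt.continuousAt.tendsto.comp hfx
    rw [hφθ] at this
    exact this ht
  have hev : θ =ᶠ[𝓝[s] x] φ ∘ f := by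
    filter_upwards [hright, hmem, self_mem_nhdsWithin] with y hgy hy hys
    exact hinj (hθ hys) hy ((hgθ hys).trans hgy.symm)
  rw [div_eq_inv_mul]
  exact (hφ.hasDerivAt.comp_hasDerivWithinAt_of_eq x hf (hgθ hx)).congr_of_eventuallyEq hev
    (by simp [← hgθ hx, hφθ])

theorem contDiffOn_one_of_comp_eqOn {g g' f f' θ : ℝ → ℝ} {s t : Set ℝ}
    (hs : UniqueDiffOn ℝ s) (ht : IsOpen t) (hg : ∀ y ∈ t, HasStrictDerivAt g (g' y) y)
    (hg'cont : ContinuousOn g' t) (hg'0 : ∀ y ∈ t, g' y ≠ 0) (hinj : InjOn g t)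
    (hf : ∀ x ∈ s, HasDerivWithinAt f (f' x) s x) (hf'cont : ContinuousOn f' s)
    (hθ : MapsTo θ s t) (hgθ : EqOn (g ∘ θ) f s) : ContDiffOn ℝ 1 θ s := by
  have hθ' : ∀ x ∈ s, HasDerivWithinAt θ (f' x / g' (θ x)) s x := fun x hx =>
    (hg _ (hθ hx)).hasDerivWithinAt_of_comp_eqOn (hg'0 _ (hθ hx)) hinj (ht.mem_nhds (hθ hx))
      (hf x hx) hθ hgθ hx
  have hθcont : ContinuousOn θ s := fun x hx => (hθ' x hx).continuousWithinAt
  exact contDiffOn_one_of_hasDerivWithinAt hs hθ'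
    (hf'cont.div (hg'cont.comp hθcont hθ) fun x hx => hg'0 _ (hθ hx))

theorem tendsto_nhdsGT_zero_of_mem_Ioo {θ : ℝ → ℝ} {b : ℝ} (hb : 0 < b)
    (hθ : ∀ m ∈ Ioc 0 b, θ m ∈ Ioo 0 m) : Tendsto θ (𝓝[>] 0) (𝓝 0) := by
  refine tendsto_of_tendsto_of_tendsto_of_le_of_le' tendsto_const_nhds
    (tendsto_id.mono_right nhdsWithin_le_nhds) ?_ ?_ <;>
    filter_upwards [Ioc_mem_nhdsGT hb] with m hm
  exacts [(hθ m hm).1.le, (hθ m hm).2.le]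

theorem theta_properties_general
    (V : ℝ → ℝ)
    (hV : ContDiffOn ℝ 1 V (Icc 0 1))
    (hVpos : ∀ m ∈ Ioc (0:ℝ) 1, 0 < V m)
    (τ : ℝ → ℝ)
    (hτC1 : ContDiffOn ℝ 1 τ (Ioc 0 1))
    (hτ' : ∀ m ∈ Ioc (0:ℝ) 1, deriv τ m + 1 / V m > 0)
    (Θ : ℝ → ℝ)
    (hΘ : ∀ m ∈ Ioc (0:ℝ) 1, Θ m ∈ Ioo 0 m ∧ (∫ s in Ioc (Θ m) m, 1 / V s) = τ (Θ m)) :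
    StrictMonoOn Θ (Ioc 0 1) ∧
    ContDiffOn ℝ 1 Θ (Ioc 0 1) ∧
    (∀ m ∈ Ioc (0:ℝ) 1, 0 < Θ m ∧ Θ m < m) ∧
    Tendsto Θ (nhdsWithin 0 (Ioi 0)) (nhds 0) := by
  set f : ℝ → ℝ := fun s => 1 / V s
  have hf : ContinuousOn f (Ioc 0 1) := continuousOn_const.div
    (hV.continuousOn.mono Ioc_subset_Icc_self) fun x hx => (hVpos x hx).ne'
  have h1 : (1 : ℝ) ∈ Ioc 0 1 := ⟨one_pos, le_rfl⟩
  set F : ℝ → ℝ := fun u => ∫ t in (1:ℝ)..u, f t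
  set G : ℝ → ℝ := fun u => τ u + F u
  have hmaps : MapsTo Θ (Ioc 0 1) (Ioo 0 1) := fun m hm =>
    ⟨(hΘ m hm).1.1, (hΘ m hm).1.2.trans_le hm.2⟩
  have hGmono : StrictMonoOn G (Ioc 0 1) :=
    strictMonoOn_add_integral hτC1 hf h1 fun x hx => hτ' x (Ioo_subset_Ioc_self hx)
  have hFmono : StrictMonoOn F (Ioc 0 1) :=
    strictMonoOn_integral hf h1 fun x hx => one_div_pos.2 (hVpos x (Ioo_subset_Ioc_self hx))
  have hGΘ : EqOn (G ∘ Θ) F (Ioc 0 1) := fun m hm => by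
    have h := (hΘ m hm).2
    rw [setIntegral_Ioc_eq_integral_sub_integral hf h1 (Ioo_subset_Ioc_self (hmaps hm)) hm
      (hΘ m hm).1.2.le] at h
    simp only [Function.comp, G, F]
    linarith
  have hτ'cont : ContinuousOn (deriv τ) (Ioo 0 1) :=
    (hτC1.mono Ioo_subset_Ioc_self).continuousOn_deriv_of_isOpen isOpen_Ioo le_rfl
  refine ⟨(hGmono.mono Ioo_subset_Ioc_self).of_comp hmaps (hFmono.congr hGΘ.symm), ?_,
    fun m hm => (hΘ m hm).1, tendsto_nhdsGT_zero_of_mem_Ioo one_pos fun m hm => (hΘ m hm).1⟩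
  exact contDiffOn_one_of_comp_eqOn (uniqueDiffOn_Ioc 0 1) isOpen_Ioo
    (fun y hy => hasStrictDerivAt_add_integral hτC1 hf h1 hy)
    (hτ'cont.add (hf.mono Ioo_subset_Ioc_self)) (fun y hy => (hτ' y (Ioo_subset_Ioc_self hy)).ne')
    (hGmono.injOn.mono Ioo_subset_Ioc_self) (fun x hx => hasDerivWithinAt_integral_Ioc hf h1 hx)
    hf hmaps hGΘ

/-- The function `Θ : (0,1] → (0,1]` is strictly increasing,
continuously differentiable on `(0,1]`, satisfies `0 < Θ m < m` for all
`m ∈ (0,1]`, and `Θ m → 0` as `m → 0⁺`. -/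
theorem theta_properties
    (V : ℝ → ℝ)
    (hV : ContDiffOn ℝ 1 V (Icc 0 1))
    (hVpos : ∀ m ∈ Ioc (0:ℝ) 1, 0 < V m)
    (hV0 : V 0 = 0)
    (hdiv : ∀ m ∈ Ioc (0:ℝ) 1, ¬ MeasureTheory.IntegrableOn (fun s => 1 / V s) (Ioc 0 m))
    (τ : ℝ → ℝ)
    (hτcont : ContinuousOn τ (Icc 0 1))
    (hτpos : ∀ m ∈ Icc (0:ℝ) 1, 0 < τ m)
    (hτC1 : ContDiffOn ℝ 1 τ (Ioc 0 1))
    (hτ' : ∀ m ∈ Ioc (0:ℝ) 1, deriv τ m + 1 / V m > 0)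
    (Θ : ℝ → ℝ)
    (hΘ : ∀ m ∈ Ioc (0:ℝ) 1, Θ m ∈ Ioo 0 m ∧ (∫ s in Ioc (Θ m) m, 1 / V s) = τ (Θ m)) :
    StrictMonoOn Θ (Ioc 0 1) ∧
    ContDiffOn ℝ 1 Θ (Ioc 0 1) ∧
    (∀ m ∈ Ioc (0:ℝ) 1, 0 < Θ m ∧ Θ m < m) ∧
    Tendsto Θ (nhdsWithin 0 (Ioi 0)) (nhds 0) :=
  theta_properties_general V hV hVpos τ hτC1 hτ' Θ hΘ
end

section
/- Let g : [0,1] → [0,1] be continuous, strictly increasing, C¹ on [0,1), with g(m) ≤ m, and extend g⁻¹ by g⁻¹(m) = 1 for m > g(1). Define Δ(m) = Θ(g⁻¹(m)). Then the condition Δ(m) < m for all m ∈ (0,1] is equivalent to τ(Δ(m)) > ∫_m^{g⁻¹(m)} 1/V(s) ds for all m ∈ (0,1]. -/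
open Set Real

lemma integ_aux (V : ℝ → ℝ) (hV : ContDiffOn ℝ 1 V (Icc 0 1))
    (hVpos : ∀ m ∈ Ioc (0:ℝ) 1, 0 < V m) {a b : ℝ} (ha : 0 < a) (hb : b ≤ 1) :
    MeasureTheory.IntegrableOn (fun s => 1 / V s) (Ioc a b) := by
  rcases le_or_gt a b with hab | hab
  · have hsub : Icc a b ⊆ Ioc (0:ℝ) 1 := fun x hx => ⟨lt_of_lt_of_le ha hx.1, hx.2.trans hb⟩
    have hcont : ContinuousOn (fun s => 1 / V s) (Icc a b) := by
      apply ContinuousOn.div continuousOn_const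
      · exact (hV.continuousOn).mono (fun x hx => ⟨le_of_lt (hsub hx).1, (hsub hx).2⟩)
      · exact fun x hx => ne_of_gt (hVpos x (hsub hx))
    exact (hcont.integrableOn_Icc).mono_set Ioc_subset_Icc_self
  · simp [Ioc_eq_empty (not_lt.mpr hab.le)]

/-- With `g` continuous, strictly increasing, `g m ≤ m`, `g⁻¹` extended by
`g⁻¹ m = 1` for `m > g 1`, and `Δ = Θ ∘ g⁻¹`, the condition `Δ m < m` for all
`m ∈ (0,1]` is equivalent to `τ (Δ m) > ∫_m^{g⁻¹ m} 1/V` for all `m ∈ (0,1]`. -/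
theorem delta_condition_equivalence
    (V : ℝ → ℝ)
    (hV : ContDiffOn ℝ 1 V (Icc 0 1))
    (hVpos : ∀ m ∈ Ioc (0:ℝ) 1, 0 < V m)
    (hV0 : V 0 = 0)
    (hdiv : ∀ m ∈ Ioc (0:ℝ) 1, ¬ MeasureTheory.IntegrableOn (fun s => 1 / V s) (Ioc 0 m))
    (τ : ℝ → ℝ)
    (hτcont : ContinuousOn τ (Icc 0 1))
    (hτpos : ∀ m ∈ Icc (0:ℝ) 1, 0 < τ m)
    (hτC1 : ContDiffOn ℝ 1 τ (Ioc 0 1))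
    (hτ' : ∀ m ∈ Ioc (0:ℝ) 1, deriv τ m + 1 / V m > 0)
    (Θ : ℝ → ℝ)
    (hΘ : ∀ m ∈ Ioc (0:ℝ) 1, Θ m ∈ Ioo 0 m ∧ (∫ s in Ioc (Θ m) m, 1 / V s) = τ (Θ m))
    (g ginv : ℝ → ℝ)
    (hgcont : ContinuousOn g (Icc 0 1))
    (hgmono : StrictMonoOn g (Icc 0 1))
    (hgle : ∀ m ∈ Icc (0:ℝ) 1, g m ≤ m)
    (hgmaps : ∀ m ∈ Icc (0:ℝ) 1, g m ∈ Icc (0:ℝ) 1)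
    (hginv_left : ∀ m ∈ Icc (0:ℝ) 1, ginv (g m) = m)
    (hginv_ext : ∀ m ∈ Icc (0:ℝ) 1, g 1 < m → ginv m = 1)
    (hginv_maps : ∀ m ∈ Icc (0:ℝ) 1, ginv m ∈ Icc (0:ℝ) 1)
    (Δ : ℝ → ℝ)
    (hΔ : ∀ m ∈ Icc (0:ℝ) 1, Δ m = Θ (ginv m)) :
    (∀ m ∈ Ioc (0:ℝ) 1, Δ m < m) ↔
    (∀ m ∈ Ioc (0:ℝ) 1, (∫ s in Ioc m (ginv m), 1 / V s) < τ (Δ m)) := by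
  -- pointwise equivalence
  have key : ∀ m ∈ Ioc (0:ℝ) 1, (Δ m < m ↔ (∫ s in Ioc m (ginv m), 1 / V s) < τ (Δ m)) := by
    intro m hm
    have hmIcc : m ∈ Icc (0:ℝ) 1 := ⟨hm.1.le, hm.2⟩
    -- m ≤ ginv m
    have hmn : m ≤ ginv m := by
      rcases lt_or_ge (g 1) m with h1 | h1
      · rw [hginv_ext m hmIcc h1]; exact hm.2
      · have hg0 : g 0 = 0 :=
          le_antisymm (hgle 0 ⟨le_refl 0, zero_le_one⟩) (hgmaps 0 ⟨le_refl 0, zero_le_one⟩).1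
        have : m ∈ Icc (g 0) (g 1) := by rw [hg0]; exact ⟨hm.1.le, h1⟩
        obtain ⟨x, hx, hgx⟩ := intermediate_value_Icc (zero_le_one) hgcont this
        have := hginv_left x hx
        rw [hgx] at this
        rw [this]
        exact (hgx ▸ hgle x hx)
    set n := ginv m with hn
    have hnIcc : n ∈ Icc (0:ℝ) 1 := hginv_maps m hmIcc
    have hnIoc : n ∈ Ioc (0:ℝ) 1 := ⟨lt_of_lt_of_le hm.1 hmn, hnIcc.2⟩
    obtain ⟨hΘmem, hΘint⟩ := hΘ n hnIoc
    have hΔm : Δ m = Θ n := hΔ m hmIcc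
    rw [hΔm]
    set d := Θ n with hd
    constructor
    · intro hdm
      -- τ d = ∫ Ioc d n = ∫ Ioc d m + ∫ Ioc m n, and ∫ Ioc d m > 0
      have hi1 : MeasureTheory.IntegrableOn (fun s => 1 / V s) (Ioc d m) :=
        integ_aux V hV hVpos hΘmem.1 hm.2
      have hi2 : MeasureTheory.IntegrableOn (fun s => 1 / V s) (Ioc m n) :=
        integ_aux V hV hVpos hm.1 hnIcc.2
      have hsplit : (∫ s in Ioc d n, 1 / V s)
          = (∫ s in Ioc d m, 1 / V s) + (∫ s in Ioc m n, 1 / V s) := by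
        rw [← MeasureTheory.setIntegral_union]
        · rw [Ioc_union_Ioc_eq_Ioc hdm.le hmn]
        · rw [Set.disjoint_left]; intro x hx hx'; exact absurd hx.2 (not_le.mpr hx'.1)
        · exact measurableSet_Ioc
        · exact hi1
        · exact hi2
      have hpos : 0 < ∫ s in Ioc d m, 1 / V s := by
        rw [← intervalIntegral.integral_of_le hdm.le]
        apply intervalIntegral.intervalIntegral_pos_of_pos_on
        · exact (intervalIntegrable_iff_integrableOn_Ioc_of_le hdm.le).mpr hi1
        · intro x hx
          have hx1 : x ∈ Ioc (0:ℝ) 1 := ⟨hΘmem.1.trans hx.1, hx.2.le.trans hm.2⟩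
          exact div_pos one_pos (hVpos x hx1)
        · exact hdm
      rw [hΘint] at hsplit
      linarith
    · intro hint
      by_contra hmd
      push_neg at hmd
      -- m ≤ d, so ∫ Ioc d n ≤ ∫ Ioc m n
      have hi2 : MeasureTheory.IntegrableOn (fun s => 1 / V s) (Ioc m n) :=
        integ_aux V hV hVpos hm.1 hnIcc.2
      have hle : (∫ s in Ioc d n, 1 / V s) ≤ (∫ s in Ioc m n, 1 / V s) := by
        apply MeasureTheory.setIntegral_mono_set hi2
        · filter_upwards [MeasureTheory.ae_restrict_mem measurableSet_Ioc] with x hx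
          exact le_of_lt (div_pos one_pos (hVpos x ⟨hm.1.trans hx.1, hx.2.trans hnIcc.2⟩))
        · exact Filter.Eventually.of_forall (Ioc_subset_Ioc_left hmd)
      rw [hΘint] at hle
      linarith
  constructor
  · intro H m hm; exact (key m hm).mp (H m hm)
  · intro H m hm; exact (key m hm).mpr (H m hm)
end

section
/- (Finite reaching of maximal maturity.) Under the assumptions of the previous statement, the sequence (b_n) reaches g(1) in finitely many steps: there exists N ∈ ℕ with b_{N+2} = g(1). -/
open Set Real

/-- The maturity-transmission sequence reaches `g1` in finitely many
steps: there exists `N` with `b_{N+2} = g1`. -/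
theorem maturity_sequence_reaches_top
    (Θ1 g1 : ℝ)
    (hΘ1pos : 0 < Θ1) (hΘ1lt : Θ1 < g1) (hg1le : g1 ≤ 1)
    (Δ Δinv : ℝ → ℝ)
    (hΔcont : ContinuousOn Δ (Icc 0 g1))
    (hΔmono : StrictMonoOn Δ (Icc 0 g1))
    (hΔ0 : Δ 0 = 0) (hΔg1 : Δ g1 = Θ1)
    (hΔlt : ∀ m ∈ Ioc (0:ℝ) g1, Δ m < m)
    (hΔinv_maps : ∀ y ∈ Icc (0:ℝ) Θ1, Δinv y ∈ Icc (0:ℝ) g1)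
    (hΔinv_right : ∀ y ∈ Icc (0:ℝ) Θ1, Δ (Δinv y) = y)
    (hΔinv_left : ∀ m ∈ Icc (0:ℝ) g1, Δinv (Δ m) = m)
    (bbar : ℝ) (hbbar : bbar ∈ Ioo (0:ℝ) g1)
    (b : ℕ → ℝ)
    (hb0 : b 0 = bbar)
    (hbrec : ∀ n, b (n + 1) = if b n < Θ1 then Δinv (b n) else g1) :
    ∃ N : ℕ, b (N + 2) = g1 := by
  -- It suffices to find n with Θ1 ≤ b n
  suffices h : ∃ n : ℕ, ¬ b n < Θ1 by
    obtain ⟨n, hn⟩ := h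
    refine ⟨n, ?_⟩
    have h1 : b (n + 1) = g1 := by rw [hbrec n, if_neg hn]
    have h2 : ¬ b (n + 1) < Θ1 := by rw [h1]; linarith
    have := hbrec (n + 1)
    rw [if_neg h2] at this
    simpa using this
  by_contra hcon
  push_neg at hcon
  -- so ∀ n, b n < Θ1 and b (n+1) = Δinv (b n)
  have hrec : ∀ n, b (n + 1) = Δinv (b n) := fun n => by
    rw [hbrec n, if_pos (hcon n)]
  -- positivity and bounds
  have hpos : ∀ n, 0 < b n := by
    intro n
    induction n with
    | zero => rw [hb0]; exact hbbar.1
    | succ k ih =>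
      rw [hrec k]
      have hk : b k ∈ Icc (0:ℝ) Θ1 := ⟨le_of_lt ih, le_of_lt (hcon k)⟩
      have hmem := hΔinv_maps _ hk
      rcases lt_or_eq_of_le hmem.1 with h | h
      · exact h
      · exfalso
        have := hΔinv_right _ hk
        rw [← h, hΔ0] at this
        linarith [ih]
  have hIcc : ∀ n, b n ∈ Icc (0:ℝ) Θ1 :=
    fun n => ⟨le_of_lt (hpos n), le_of_lt (hcon n)⟩
  have hIcc' : ∀ n, b n ∈ Icc (0:ℝ) g1 :=
    fun n => ⟨le_of_lt (hpos n), le_of_lt (lt_trans (hcon n) hΘ1lt)⟩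
  -- Δ (b (n+1)) = b n
  have hΔb : ∀ n, Δ (b (n + 1)) = b n := fun n => by
    rw [hrec n]; exact hΔinv_right _ (hIcc n)
  -- strict increase
  have hstep : ∀ n, b n < b (n + 1) := by
    intro n
    have h1 : Δ (b (n + 1)) < b (n + 1) :=
      hΔlt _ ⟨hpos (n + 1), (hIcc' (n + 1)).2⟩
    rw [hΔb n] at h1; exact h1
  have hmono : StrictMono b := strictMono_nat_of_lt_succ hstep
  have hbdd : BddAbove (Set.range b) := ⟨Θ1, by rintro x ⟨n, rfl⟩; exact (hIcc n).2⟩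
  set L := ⨆ n, b n with hL
  have htend : Filter.Tendsto b Filter.atTop (nhds L) :=
    tendsto_atTop_ciSup hmono.monotone hbdd
  have hLmem : L ∈ Icc (0:ℝ) g1 := by
    constructor
    · exact le_trans (le_of_lt (hpos 0)) (le_ciSup hbdd 0)
    · exact le_trans (ciSup_le fun n => (hIcc n).2) (le_of_lt hΘ1lt)
  have hLpos : 0 < L := lt_of_lt_of_le (hpos 0) (le_ciSup hbdd 0)
  -- limits
  have htend1 : Filter.Tendsto (fun n => b (n + 1)) Filter.atTop (nhds L) :=
    htend.comp (Filter.tendsto_add_atTop_nat 1)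
  have htend1' : Filter.Tendsto (fun n => b (n + 1)) Filter.atTop
      (nhdsWithin L (Icc 0 g1)) := by
    refine tendsto_nhdsWithin_of_tendsto_nhds_of_eventually_within _ htend1 ?_
    exact Filter.Eventually.of_forall fun n => hIcc' (n + 1)
  have htendΔ : Filter.Tendsto (fun n => Δ (b (n + 1))) Filter.atTop (nhds (Δ L)) :=
    (hΔcont L hLmem).tendsto.comp htend1'
  have htendΔ' : Filter.Tendsto (fun n => Δ (b (n + 1))) Filter.atTop (nhds L) := by
    simpa only [hΔb] using htend
  have hfix : Δ L = L := tendsto_nhds_unique htendΔ htendΔ'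
  have := hΔlt L ⟨hLpos, hLmem.2⟩
  linarith
end

section
/- Let β₀ ≥ 0, ρ > 0, r > 0, ξ̄ ≥ 0, and let f : ℝ → ℝ be continuous, bounded by β₀ in the sense that |f(x)| ≤ β₀|x| and, more strongly, suppose f(x) = β(x)x with β continuous, nonnegative, decreasing, and β(x) ≤ β(0) =: β₀. Any nonnegative solution x(t) of the delay differential equation x'(t) = −(ρ + β(x(t)))x(t) + 2ξ̄ β(x(t−r))x(t−r) for t ≥ r, with continuous nonnegative initial data on [0,r], is bounded on [0,∞). -/
/-!
Since `β → 0`, the delayed gain `2 ξ̄ β(z) z` grows at most like `A + (ρ/2) z`, so at any level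
`M > max(sup_{[0,r]} x, 2A/ρ)` the right-hand side is negative once `x(t) = M ≥ x(t - r)`.
Hence `x` can never cross `M`: by the method of steps, on each interval `[nr, (n+1)r]` the delayed
value is already known to be at most `M`, and the fencing theorem for right derivatives applies.
-/

open Set Real Filter Topology

lemma AntitoneOn.nonneg_of_tendsto_zero {β : ℝ → ℝ} (hβanti : AntitoneOn β (Ici 0))
    (hβlim : Tendsto β atTop (𝓝 0)) {z : ℝ} (hz : 0 ≤ z) : 0 ≤ β z :=
  le_of_tendsto hβlim <| (eventually_ge_atTop z).mono fun _ hw =>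
    hβanti hz (hz.trans hw) hw

lemma AntitoneOn.exists_mul_self_le_add_mul {β : ℝ → ℝ} (hβanti : AntitoneOn β (Ici 0))
    (hβlim : Tendsto β atTop (𝓝 0)) {ε : ℝ} (hε : 0 < ε) :
    ∃ A, ∀ z ≥ 0, β z * z ≤ A + ε * z := by
  obtain ⟨K, hK⟩ := eventually_atTop.mp (hβlim.eventually_le_const hε)
  set K' := max K 0
  have hK' : 0 ≤ K' := le_max_right _ _
  have hβ0 : 0 ≤ β 0 := hβanti.nonneg_of_tendsto_zero hβlim le_rfl
  refine ⟨β 0 * K', fun z hz => ?_⟩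
  rcases le_total z K' with hzK | hKz
  · have : β z ≤ β 0 := hβanti (mem_Ici.mpr le_rfl) hz hz
    calc β z * z ≤ β 0 * K' := mul_le_mul this hzK hz hβ0
      _ ≤ β 0 * K' + ε * z := le_add_of_nonneg_right (mul_nonneg hε.le hz)
  · have : β z ≤ ε := (hβanti hK' hz hKz).trans (hK K' (le_max_left _ _))
    calc β z * z ≤ ε * z := mul_le_mul_of_nonneg_right this hz
      _ ≤ β 0 * K' + ε * z := le_add_of_nonneg_left (mul_nonneg hβ0 hK')

lemma le_of_delay_deriv_neg_at_level {x x' : ℝ → ℝ} {r M : ℝ} (hr : 0 < r)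
    (hx : ContinuousOn x (Ici 0)) (hinit : ∀ t ∈ Icc 0 r, x t ≤ M)
    (hderiv : ∀ t ≥ r, HasDerivAt x (x' t) t)
    (hlevel : ∀ t ≥ r, x t = M → x (t - r) ≤ M → x' t < 0) :
    ∀ t ≥ 0, x t ≤ M := by
  have hsteps : ∀ n : ℕ, ∀ t ∈ Icc 0 ((n + 1) * r), x t ≤ M := by
    intro n
    induction n with
    | zero => simpa using hinit
    | succ n ih =>
      push_cast at ih ⊢
      intro t ⟨ht0, ht⟩
      rcases le_total t ((n + 1) * r) with htn | htn
      · exact ih t ⟨ht0, htn⟩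
      have hstart : x ((n + 1) * r) ≤ M := ih _ ⟨by positivity, le_rfl⟩
      have hge_r : ∀ s ∈ Ico ((n + 1) * r) ((n + 1 + 1) * r), r ≤ s := fun s hs => by
        nlinarith [hs.1]
      have hdelayed : ∀ s ∈ Ico ((n + 1) * r) ((n + 1 + 1) * r), x (s - r) ≤ M := fun s hs =>
        ih _ ⟨by nlinarith [hs.1], by linarith [hs.2]⟩
      exact image_le_of_deriv_right_lt_deriv_boundary (B := fun _ => M) (B' := fun _ => 0)
        (hx.mono fun s hs => le_trans (by positivity) hs.1)
        (fun s hs => (hderiv s (hge_r s hs)).hasDerivWithinAt) hstart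
        (fun _ => hasDerivAt_const _ _)
        (fun s hs hxs => hlevel s (hge_r s hs) hxs (hdelayed s hs)) ⟨htn, ht⟩
  intro t ht
  obtain ⟨n, hn⟩ := exists_nat_ge (t / r)
  exact hsteps n t ⟨ht, by rw [div_le_iff₀ hr] at hn; nlinarith⟩

theorem delay_equation_bounded_general
    (β : ℝ → ℝ)
    (hβanti : AntitoneOn β (Ici 0))
    (hβlim : Tendsto β atTop (nhds 0))
    (ρ r ξ : ℝ) (hρ : 0 < ρ) (hr : 0 < r) (hξ : 0 ≤ ξ)
    (x : ℝ → ℝ)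
    (hxcont : ContinuousOn x (Ici 0))
    (hxnonneg : ∀ t ≥ (0:ℝ), 0 ≤ x t)
    (hdde : ∀ t ≥ r, HasDerivAt x (-(ρ + β (x t)) * x t + 2 * ξ * β (x (t - r)) * x (t - r)) t) :
    ∃ M : ℝ, ∀ t ≥ (0:ℝ), x t ≤ M := by
  have hgain_anti : AntitoneOn (fun z => 2 * ξ * β z) (Ici 0) := fun a ha b hb hab =>
    mul_le_mul_of_nonneg_left (hβanti ha hb hab) (by positivity)
  have hgain_lim : Tendsto (fun z => 2 * ξ * β z) atTop (𝓝 0) := by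
    simpa using hβlim.const_mul (2 * ξ)
  obtain ⟨A, hA⟩ := hgain_anti.exists_mul_self_le_add_mul hgain_lim (half_pos hρ)
  obtain ⟨C, hC⟩ := isCompact_Icc.bddAbove_image 
    (hxcont.mono (Icc_subset_Ici_self : Icc 0 r ⊆ Ici 0))
  set M := max C (2 * A / ρ + 1)
  have hinit : ∀ t ∈ Icc 0 r, x t ≤ M := fun t ht =>
    (hC (mem_image_of_mem x ht)).trans (le_max_left _ _)
  have hM0 : 0 ≤ M := (hxnonneg 0 le_rfl).trans (hinit 0 ⟨le_rfl, hr.le⟩)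
  have hAM : 2 * A < ρ * M := by
    have : 2 * A / ρ < M := (lt_add_one _).trans_le (le_max_right _ _)
    rwa [div_lt_iff₀' hρ] at this
  have hβM : 0 ≤ β M * M := mul_nonneg (hβanti.nonneg_of_tendsto_zero hβlim hM0) hM0
  refine ⟨M, le_of_delay_deriv_neg_at_level hr hxcont hinit hdde fun t ht hxt hxr => ?_⟩
  have hgain := hA (x (t - r)) (hxnonneg _ (sub_nonneg.mpr ht))
  have hgain_M : ρ / 2 * x (t - r) ≤ ρ / 2 * M := mul_le_mul_of_nonneg_left hxr (by positivity)
  rw [hxt]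
  linarith

/-- boundedness of solutions when ρ > 0: every nonnegative solution of
`x'(t) = −(ρ + β(x t)) x t + 2 ξ̄ β(x (t−r)) x (t−r)` for `t ≥ r`, with continuous
nonnegative initial data, is bounded on `[0,∞)`. -/
theorem delay_equation_bounded
    (β : ℝ → ℝ)
    (hβcont : ContinuousOn β (Ici 0))
    (hβpos : ∀ z ∈ Ici (0:ℝ), 0 < β z)
    (hβanti : AntitoneOn β (Ici 0))
    (hβlim : Tendsto β atTop (nhds 0))
    (ρ r ξ : ℝ) (hρ : 0 < ρ) (hr : 0 < r) (hξ : 0 ≤ ξ)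
    (x : ℝ → ℝ)
    (hxcont : ContinuousOn x (Ici 0))
    (hxnonneg : ∀ t ≥ (0:ℝ), 0 ≤ x t)
    (hdde : ∀ t ≥ r, HasDerivAt x (-(ρ + β (x t)) * x t + 2 * ξ * β (x (t - r)) * x (t - r)) t) :
    ∃ M : ℝ, ∀ t ≥ (0:ℝ), x t ≤ M :=
  delay_equation_bounded_general β hβanti hβlim ρ r ξ hρ hr hξ x hxcont hxnonneg hdde
end

section
/- (Global stability of the trivial solution of the immature-cell delay equation, sufficiency.) Assume (2ξ̄ − 1)β(0) < ρ with ξ̄ ≥ 0, ρ ≥ 0, r > 0, and β : [0,∞) → (0,∞) continuous, decreasing. Then every nonnegative solution x of x'(t) = −(ρ + β(x(t)))x(t) + 2ξ̄ β(x(t−r))x(t−r), t ≥ r, with continuous nonnegative initial data on [0,r], satisfies lim_{t→∞} x(t) = 0. -/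
open Set Real Filter

/-- global stability of the trivial solution: if `(2ξ̄ − 1) β 0 < ρ`,
every nonnegative solution of
`x'(t) = −(ρ + β(x t)) x t + 2 ξ̄ β(x (t−r)) x (t−r)` for `t ≥ r`, with continuous
nonnegative initial data on `[0,r]`, tends to `0` at `+∞`. -/
theorem delay_equation_global_stability
    (β : ℝ → ℝ)
    (hβcont : ContinuousOn β (Ici 0))
    (hβpos : ∀ z ∈ Ici (0:ℝ), 0 < β z)
    (hβanti : AntitoneOn β (Ici 0))
    (ρ r ξ : ℝ) (hρ : 0 ≤ ρ) (hr : 0 < r) (hξ : 0 ≤ ξ)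
    (hstab : (2 * ξ - 1) * β 0 < ρ)
    (x : ℝ → ℝ)
    (hxcont : ContinuousOn x (Ici 0))
    (hxnonneg : ∀ t ≥ (0:ℝ), 0 ≤ x t)
    (hdde : ∀ t ≥ r, HasDerivAt x (-(ρ + β (x t)) * x t + 2 * ξ * β (x (t - r)) * x (t - r)) t) :
    Tendsto x atTop (nhds 0) := by
  have h2r : (0:ℝ) ≤ 2*r := by linarith
  have hβ0 : 0 < β 0 := hβpos 0 (mem_Ici.mpr le_rfl)
  have hβle : ∀ z, 0 ≤ z → β z ≤ β 0 :=
    fun z hz => hβanti (mem_Ici.mpr le_rfl) (mem_Ici.mpr hz) hz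
  -- continuity helpers
  have hxmap : MapsTo x (Ici 0) (Ici 0) := fun t ht => mem_Ici.mpr (hxnonneg t ht)
  have hcH : ContinuousOn (fun u => β (x u) * x u) (Ici 0) :=
    (hβcont.comp hxcont hxmap).mul hxcont
  have hcG : ContinuousOn (fun u => ρ * x u + β (x u) * x u) (Ici 0) :=
    (continuousOn_const.mul hxcont).add hcH
  have hsub : ∀ a b : ℝ, 0 ≤ a → 0 ≤ b → uIcc a b ⊆ Ici (0:ℝ) := by
    intro a b ha hb u hu
    rw [Set.mem_uIcc] at hu
    rcases hu with h | h <;> (simp only [mem_Ici]; linarith)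
  have hsubr : ∀ a b : ℝ, r ≤ a → r ≤ b → uIcc a b ⊆ Ici r := by
    intro a b ha hb u hu
    rw [Set.mem_uIcc] at hu
    rcases hu with h | h <;> (simp only [mem_Ici]; linarith)
  have hintH : ∀ a b : ℝ, 0 ≤ a → 0 ≤ b →
      IntervalIntegrable (fun u => β (x u) * x u) MeasureTheory.volume a b :=
    fun a b ha hb => (hcH.mono (hsub a b ha hb)).intervalIntegrable
  have hintG : ∀ a b : ℝ, 0 ≤ a → 0 ≤ b →
      IntervalIntegrable (fun u => ρ * x u + β (x u) * x u) MeasureTheory.volume a b :=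
    fun a b ha hb => (hcG.mono (hsub a b ha hb)).intervalIntegrable
  have hintx : ∀ a b : ℝ, 0 ≤ a → 0 ≤ b →
      IntervalIntegrable x MeasureTheory.volume a b :=
    fun a b ha hb => (hxcont.mono (hsub a b ha hb)).intervalIntegrable
  have hcsh : ContinuousOn (fun t => x (t - r)) (Ici r) :=
    hxcont.comp ((continuous_id.sub continuous_const).continuousOn)
      (fun t ht => by simp only [mem_Ici] at *; linarith)
  have hcφ : ContinuousOn
      (fun t => -(ρ + β (x t)) * x t + 2 * ξ * β (x (t - r)) * x (t - r)) (Ici r) := by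
    have h1 : ContinuousOn x (Ici r) := hxcont.mono (Ici_subset_Ici.mpr hr.le)
    have h2 : ContinuousOn (fun t => β (x t)) (Ici r) :=
      hβcont.comp h1 (fun t ht => mem_Ici.mpr (hxnonneg t (le_trans hr.le ht)))
    have h3 : ContinuousOn (fun t => β (x (t - r))) (Ici r) :=
      hβcont.comp hcsh (fun t ht =>
        mem_Ici.mpr (hxnonneg _ (by simp only [mem_Ici] at ht ⊢; linarith)))
    exact (((continuousOn_const.add h2).neg).mul h1).add
      ((continuousOn_const.mul h3).mul hcsh)
  have hintφ : ∀ a b : ℝ, r ≤ a → r ≤ b →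
      IntervalIntegrable
        (fun t => -(ρ + β (x t)) * x t + 2 * ξ * β (x (t - r)) * x (t - r))
        MeasureTheory.volume a b :=
    fun a b ha hb => (hcφ.mono (hsubr a b ha hb)).intervalIntegrable
  -- FTC
  have hftc : ∀ a b : ℝ, r ≤ a → a ≤ b →
      (∫ t in a..b, (-(ρ + β (x t)) * x t + 2 * ξ * β (x (t - r)) * x (t - r)))
        = x b - x a := by
    intro a b ha hab
    apply intervalIntegral.integral_eq_sub_of_hasDerivAt
    · intro t ht
      rw [uIcc_of_le hab] at ht
      exact hdde t (le_trans ha ht.1)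
    · exact hintφ a b ha (le_trans ha hab)
  -- Step A : main integral identity
  have hA : ∀ T, r ≤ T →
      x T - x r = -(∫ s in r..T, (ρ * x s + β (x s) * x s))
        + 2*ξ * ∫ u in (0:ℝ)..(T-r), β (x u) * x u := by
    intro T hT
    have h1 := hftc r T le_rfl hT
    have hcHs : ContinuousOn (fun t => 2*ξ*((fun u => β (x u) * x u) (t - r))) (Ici r) := by
      have h3 : ContinuousOn (fun t => β (x (t - r))) (Ici r) :=
        hβcont.comp hcsh (fun t ht =>
          mem_Ici.mpr (hxnonneg _ (by simp only [mem_Ici] at ht ⊢; linarith)))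
      exact continuousOn_const.mul (h3.mul hcsh)
    have hint2 : IntervalIntegrable (fun t => 2*ξ*((fun u => β (x u) * x u) (t - r)))
        MeasureTheory.volume r T := (hcHs.mono (hsubr r T le_rfl hT)).intervalIntegrable
    have hcongr : (∫ t in r..T, (-(ρ + β (x t)) * x t + 2 * ξ * β (x (t - r)) * x (t - r)))
        = ∫ t in r..T, (-(ρ * x t + β (x t) * x t) + 2*ξ*(β (x (t - r)) * x (t - r))) := by
      apply intervalIntegral.integral_congr
      intro t _
      ring
    have hadd : (∫ t in r..T, (-(ρ * x t + β (x t) * x t) + 2*ξ*(β (x (t - r)) * x (t - r))))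
        = (∫ t in r..T, -(ρ * x t + β (x t) * x t))
          + ∫ t in r..T, 2*ξ*(β (x (t - r)) * x (t - r)) :=
      intervalIntegral.integral_add ((hintG r T hr.le (le_trans hr.le hT)).neg) hint2
    have h3 : (∫ t in r..T, 2*ξ*(β (x (t - r)) * x (t - r)))
        = 2*ξ * ∫ t in r..T, β (x (t - r)) * x (t - r) :=
      intervalIntegral.integral_const_mul _ _
    have h4 : (∫ t in r..T, β (x (t - r)) * x (t - r))
        = ∫ u in (r - r)..(T - r), β (x u) * x u :=
      intervalIntegral.integral_comp_sub_right (fun u => β (x u) * x u) r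
    have h5 : (∫ t in r..T, -(ρ * x t + β (x t) * x t))
        = -(∫ t in r..T, (ρ * x t + β (x t) * x t)) :=
      intervalIntegral.integral_neg
    rw [hcongr, hadd, h3, h4, sub_self, h5] at h1
    linarith [h1]
  set C : ℝ := x r + 2*ξ * ∫ u in (0:ℝ)..r, β (x u) * x u with hCdef
  have hGnonneg : ∀ s, 0 ≤ s → 0 ≤ ρ * x s + β (x s) * x s := by
    intro s hs
    have h1 := hxnonneg s hs
    have h2 := (hβpos (x s) (mem_Ici.mpr h1)).le
    nlinarith [mul_nonneg hρ h1, mul_nonneg h2 h1]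
  -- Step B
  have hB2 : ∀ T, 2*r ≤ T →
      x T + (∫ s in r..(T-r), (ρ * x s + β (x s) * x s - 2*ξ*(β (x s) * x s))) ≤ C := by
    intro T hT
    have hrT : r ≤ T - r := by linarith
    have hT0 : (0:ℝ) ≤ T := by linarith
    have h1 := hA T (by linarith)
    have e1 : (∫ s in r..(T-r), (ρ * x s + β (x s) * x s))
        + (∫ s in (T-r)..T, (ρ * x s + β (x s) * x s))
        = ∫ s in r..T, (ρ * x s + β (x s) * x s) :=
      intervalIntegral.integral_add_adjacent_intervals
        (hintG r (T-r) hr.le (by linarith)) (hintG (T-r) T (by linarith) hT0)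
    have e2 : (∫ u in (0:ℝ)..r, β (x u) * x u) + (∫ u in r..(T-r), β (x u) * x u)
        = ∫ u in (0:ℝ)..(T-r), β (x u) * x u :=
      intervalIntegral.integral_add_adjacent_intervals
        (hintH 0 r le_rfl hr.le) (hintH r (T-r) hr.le (by linarith))
    have e2m : 2*ξ * (∫ u in (0:ℝ)..(T-r), β (x u) * x u)
        = 2*ξ * (∫ u in (0:ℝ)..r, β (x u) * x u)
          + 2*ξ * (∫ u in r..(T-r), β (x u) * x u) := by
      rw [← e2]; ring
    have e3 : 0 ≤ ∫ s in (T-r)..T, (ρ * x s + β (x s) * x s) :=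
      intervalIntegral.integral_nonneg (by linarith)
        (fun s hs => hGnonneg s (by linarith [hs.1]))
    have e4 : (∫ s in r..(T-r), (ρ * x s + β (x s) * x s - 2*ξ*(β (x s) * x s)))
        = (∫ s in r..(T-r), (ρ * x s + β (x s) * x s))
          - 2*ξ*(∫ s in r..(T-r), β (x s) * x s) := by
      rw [intervalIntegral.integral_sub (hintG r (T-r) hr.le (by linarith))
        ((hintH r (T-r) hr.le (by linarith)).const_mul (2*ξ)),
        intervalIntegral.integral_const_mul]
    rw [hCdef]
    linarith [h1, e1, e2m, e3, e4]
  -- key pointwise inequality 1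
  have key1 : ∀ z, 0 ≤ z → (2*ξ - 1) * (β z * z) ≤ ρ * z := by
    intro z hz
    have hβz := hβpos z (mem_Ici.mpr hz)
    have hβz0 := hβle z hz
    rcases le_or_gt (2*ξ - 1) 0 with h | h
    · nlinarith [mul_nonneg hρ hz, mul_nonneg hβz.le hz]
    · nlinarith [mul_nonneg (sub_nonneg.mpr hβz0) hz,
        mul_nonneg (sub_nonneg.mpr hstab.le) hz]
  -- Step C : boundedness for large T
  have hC2 : ∀ T, 2*r ≤ T → x T ≤ C := by
    intro T hT
    have h2 := hB2 T hT
    have h3 : 0 ≤ ∫ s in r..(T-r), (ρ * x s + β (x s) * x s - 2*ξ*(β (x s) * x s)) := by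
      apply intervalIntegral.integral_nonneg (by linarith)
      intro s hs
      have hxs : 0 ≤ x s := hxnonneg s (by linarith [hs.1])
      linarith [key1 (x s) hxs]
    linarith
  -- global bound B
  obtain ⟨B, hB0, hBbd⟩ : ∃ B, 0 ≤ B ∧ ∀ t, 0 ≤ t → x t ≤ B := by
    obtain ⟨m, hm, hmax⟩ := isCompact_Icc.exists_isMaxOn (nonempty_Icc.mpr h2r)
      (hxcont.mono (Icc_subset_Ici_self))
    refine ⟨max (x m) C, le_trans (hxnonneg m hm.1) (le_max_left _ _), ?_⟩
    intro t ht
    rcases le_or_gt t (2*r) with h | h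
    · exact le_trans (hmax ⟨ht, h⟩) (le_max_left _ _)
    · exact le_trans (hC2 t h.le) (le_max_right _ _)
  -- ε
  obtain ⟨ε, hεpos, hkey2⟩ : ∃ ε, 0 < ε ∧
      ∀ z, 0 ≤ z → z ≤ B → ε * z ≤ ρ * z + β z * z - 2*ξ*(β z * z) := by
    rcases lt_or_ge (2*ξ - 1) 0 with h | h
    · refine ⟨(1 - 2*ξ) * β B, by nlinarith [hβpos B (mem_Ici.mpr hB0)], ?_⟩
      intro z hz hzB
      have h1 : β B ≤ β z := hβanti (mem_Ici.mpr hz) (mem_Ici.mpr hB0) hzB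
      have h2 := mul_nonneg hρ hz
      nlinarith [mul_nonneg (sub_nonneg.mpr h1) hz]
    · refine ⟨ρ - (2*ξ-1)*β 0, by linarith [hstab], ?_⟩
      intro z hz hzB
      have h1 : β z ≤ β 0 := hβle z hz
      nlinarith [mul_nonneg h hz, mul_nonneg (sub_nonneg.mpr h1) hz]
  -- Step E : integrability of x
  have hE : ∀ S, r ≤ S → (∫ u in r..S, x u) ≤ C / ε := by
    intro S hS
    have hS0 : (0:ℝ) ≤ S := le_trans hr.le hS
    have hT := hB2 (S + r) (by linarith)
    have hTr : S + r - r = S := by ring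
    rw [hTr] at hT
    have hmono : ε * (∫ u in r..S, x u)
        ≤ ∫ s in r..S, (ρ * x s + β (x s) * x s - 2*ξ*(β (x s) * x s)) := by
      rw [← intervalIntegral.integral_const_mul]
      apply intervalIntegral.integral_mono_on hS
        ((hintx r S hr.le hS0).const_mul ε)
        ((hintG r S hr.le hS0).sub ((hintH r S hr.le hS0).const_mul (2*ξ)))
      intro s hs
      exact hkey2 (x s) (hxnonneg s (le_trans hr.le hs.1)) (hBbd s (le_trans hr.le hs.1))
    have hxT := hxnonneg (S + r) (by linarith)
    rw [le_div_iff₀ hεpos]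
    nlinarith [hT, hmono]
  -- monotone integral function
  set I : ℝ → ℝ := fun S => ∫ u in r..(max S r), x u with hIdef
  have hImono : Monotone I := by
    intro S1 S2 h
    have h1 : r ≤ max S1 r := le_max_right _ _
    have h2 : max S1 r ≤ max S2 r := max_le_max h le_rfl
    have e3 := intervalIntegral.integral_add_adjacent_intervals
      (hintx r (max S1 r) hr.le (le_trans hr.le h1))
      (hintx (max S1 r) (max S2 r) (le_trans hr.le h1) (le_trans hr.le (le_trans h1 h2)))
    have h3 : 0 ≤ ∫ u in (max S1 r)..(max S2 r), x u :=
      intervalIntegral.integral_nonneg h2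
        (fun u hu => hxnonneg u (le_trans (le_trans hr.le h1) hu.1))
    simp only [hIdef]
    linarith [e3]
  have hIbdd : BddAbove (Set.range I) := by
    refine ⟨C / ε, ?_⟩
    rintro y ⟨S, rfl⟩
    exact hE _ (le_max_right _ _)
  have hItend : Tendsto I atTop (nhds (⨆ S, I S)) := tendsto_atTop_ciSup hImono hIbdd
  -- lower bound on derivative
  obtain ⟨L, hLpos, hLval⟩ : ∃ L : ℝ, 0 < L ∧ L = (ρ + β 0) * B + 1 :=
    ⟨(ρ + β 0) * B + 1,
      by nlinarith [mul_nonneg (by linarith : (0:ℝ) ≤ ρ + β 0) hB0], rfl⟩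
  have hφlb : ∀ u, r ≤ u →
      -L ≤ -(ρ + β (x u)) * x u + 2 * ξ * β (x (u - r)) * x (u - r) := by
    intro u hu
    rw [hLval]
    have h0 : 0 ≤ u := le_trans hr.le hu
    have h1 := hxnonneg u h0
    have h2 := hBbd u h0
    have h3 := hβle (x u) h1
    have h4 := (hβpos (x u) (mem_Ici.mpr h1)).le
    have h5 := hxnonneg (u - r) (by linarith)
    have h6 := (hβpos (x (u-r)) (mem_Ici.mpr h5)).le
    nlinarith [mul_nonneg (mul_nonneg (by linarith : (0:ℝ) ≤ 2*ξ) h6) h5,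
      mul_nonneg (sub_nonneg.mpr h3) h1,
      mul_nonneg (by linarith : (0:ℝ) ≤ ρ + β 0) (by linarith : 0 ≤ B - x u)]
  -- Lipschitz-type lower bound
  have hLip : ∀ t s : ℝ, r ≤ t → t ≤ s → x t - L * (s - t) ≤ x s := by
    intro t s ht hts
    have hftc2 := hftc t s ht hts
    have hmono2 : (∫ _u in t..s, (-L : ℝ))
        ≤ ∫ u in t..s, (-(ρ + β (x u)) * x u + 2 * ξ * β (x (u - r)) * x (u - r)) :=
      intervalIntegral.integral_mono_on hts intervalIntegrable_const
        (hintφ t s ht (le_trans ht hts)) (fun u hu => hφlb u (le_trans ht hu.1))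
    rw [intervalIntegral.integral_const, smul_eq_mul] at hmono2
    nlinarith [hftc2, hmono2]
  -- final argument
  rw [Metric.tendsto_atTop]
  intro ε' hε'
  obtain ⟨δ, hδpos, hδL⟩ : ∃ δ : ℝ, 0 < δ ∧ L * δ = ε'/2 :=
    ⟨ε' / (2 * L), div_pos hε' (by linarith), by field_simp⟩
  have htend2 : Tendsto (fun t => I (t + δ) - I t) atTop (nhds 0) := by
    have h1 : Tendsto (fun t : ℝ => t + δ) atTop atTop :=
      tendsto_atTop_add_const_right _ δ tendsto_id
    have h2 := (hItend.comp h1).sub hItend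
    simpa using h2
  obtain ⟨T, hT⟩ := (Metric.tendsto_atTop.mp htend2) (δ * (ε'/2)) (by positivity)
  refine ⟨max T r, fun n hn => ?_⟩
  have hnr : r ≤ n := le_trans (le_max_right T r) hn
  have hn0 : 0 ≤ n := le_trans hr.le hnr
  rw [Real.dist_eq, sub_zero, abs_of_nonneg (hxnonneg n hn0)]
  by_contra hcon
  push_neg at hcon
  have hlow : ∀ s ∈ Icc n (n + δ), ε'/2 ≤ x s := by
    intro s hs
    have h1 := hLip n s hnr hs.1
    have h2 : L * (s - n) ≤ L * δ :=
      mul_le_mul_of_nonneg_left (by linarith [hs.2]) hLpos.le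
    linarith [hδL]
  have hchunk : δ * (ε'/2) ≤ I (n + δ) - I n := by
    have e1 : I n = ∫ u in r..n, x u := by
      simp only [hIdef]; rw [max_eq_left hnr]
    have e2 : I (n + δ) = ∫ u in r..(n+δ), x u := by
      simp only [hIdef]; rw [max_eq_left (by linarith : r ≤ n + δ)]
    have e3 := intervalIntegral.integral_add_adjacent_intervals
      (hintx r n hr.le hn0) (hintx n (n+δ) hn0 (by linarith))
    have e4 : (∫ _u in n..(n+δ), (ε'/2 : ℝ)) ≤ ∫ u in n..(n+δ), x u :=
      intervalIntegral.integral_mono_on (by linarith) intervalIntegrable_const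
        (hintx n (n+δ) hn0 (by linarith)) hlow
    rw [intervalIntegral.integral_const, smul_eq_mul] at e4
    rw [e1, e2]
    nlinarith [e3, e4]
  have h5 := hT n (le_trans (le_max_left T r) hn)
  rw [Real.dist_eq, sub_zero] at h5
  have h6 := le_abs_self (I (n+δ) - I n)
  linarith
end

section
/- (Unbounded solutions when ρ = 0.) Let β : [0,∞) → (0,∞) be continuous decreasing with f(x) := β(x)x decreasing on [x̄, ∞) for some x̄ > 0, and let ξ̄ > 1/2 with 2ξ̄ > 1. Suppose x : [0,∞) → (0,∞) is C¹ and satisfies x'(t) = 2ξ̄ f(x(t−r)) − f(x(t)) for t ≥ r, x(0) > x̄, and x'(t) > 0 for t ∈ [0,r]. Then x'(t) > 0 for all t ≥ 0 and x is unbounded (x does not converge to any finite limit). -/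
open Set Real Filter

/-!
Positivity of `x'` propagates past `t = r`: at the first time `t ≥ r` where `x'` could vanish,
`x` is increasing on `[0, t]`, so `x̄ < x (t - r) < x t` and, `f` being decreasing there,
`x' t ≥ (2ξ̄ - 1) f (x t) > 0`. Once `x` is increasing, a finite limit `C` would give
`x' ≥ (2ξ̄ - 1) f C > 0` for `t ≥ r`, forcing `x` to grow linearly.
-/

lemma forall_pos_of_pos_before {g : ℝ → ℝ} {a : ℝ} (hg : ContinuousOn g (Ici a))
    (hstep : ∀ t ≥ a, (∀ s ∈ Ico a t, 0 < g s) → 0 < g t) : ∀ t ≥ a, 0 < g t := by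
  by_contra! h
  obtain ⟨t, hta, hgt⟩ := h
  set S := Ici a ∩ g ⁻¹' Iic 0
  have hclosed : IsClosed S := hg.preimage_isClosed_of_isClosed isClosed_Ici isClosed_Iic
  have hbdd : BddBelow S := ⟨a, fun s hs => hs.1⟩
  have hmem : sInf S ∈ S := hclosed.csInf_mem ⟨t, hta, hgt⟩ hbdd
  refine not_lt.2 hmem.2 (hstep _ hmem.1 fun s hs => ?_)
  by_contra! hgs
  exact not_le.2 hs.2 (csInf_le hbdd ⟨hs.1, hgs⟩)

lemma Convex.strictMonoOn_of_hasDerivAt_pos {D : Set ℝ} (hD : Convex ℝ D) {x x' : ℝ → ℝ}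
    (hderiv : ∀ t ∈ D, HasDerivAt x (x' t) t) (hpos : ∀ t ∈ interior D, 0 < x' t) :
    StrictMonoOn x D :=
  strictMonoOn_of_deriv_pos hD (fun t ht => (hderiv t ht).continuousAt.continuousWithinAt)
    fun t ht => (hderiv t (interior_subset ht)).deriv ▸ hpos t ht

lemma tendsto_atTop_of_le_hasDerivAt {x x' : ℝ → ℝ} {a c : ℝ} (hc : 0 < c)
    (hderiv : ∀ t ≥ a, HasDerivAt x (x' t) t) (hle : ∀ t ≥ a, c ≤ x' t) :
    Tendsto x atTop atTop := by
  have hgrowth : ∀ t ≥ a, c * (t - a) ≤ x t - x a :=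
    fun t ht => (convex_Ici a).mul_sub_le_image_sub_of_le_deriv
      (fun s hs => (hderiv s hs).continuousAt.continuousWithinAt)
      (fun s hs => (hderiv s (interior_subset hs)).differentiableAt.differentiableWithinAt)
      (fun s hs => (hderiv s (interior_subset hs)).deriv ▸ hle s (interior_subset hs))
      a self_mem_Ici t ht ht
  have hlinear : Tendsto (fun t => x a + c * (t + -a)) atTop atTop :=
    tendsto_atTop_add_const_left _ _
      ((tendsto_atTop_add_const_right _ (-a) tendsto_id).const_mul_atTop hc)
  refine tendsto_atTop_mono' _ ?_ hlinear
  filter_upwards [eventually_ge_atTop a] with t ht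
  linarith [hgrowth t ht]

section DelayEquation

variable {f x x' : ℝ → ℝ} {xbar ξ r : ℝ}

lemma two_mul_sub_one_mul_le_of_delay {t : ℝ}
    (hfanti : AntitoneOn f (Ici xbar)) (hξ : 0 ≤ ξ)
    (hdde : x' t = 2 * ξ * f (x (t - r)) - f (x t))
    (hlow : xbar ≤ x (t - r)) (hle : x (t - r) ≤ x t) :
    (2 * ξ - 1) * f (x t) ≤ x' t := by
  have hf_le : f (x t) ≤ f (x (t - r)) := hfanti hlow (hlow.trans hle) hle
  rw [hdde]
  nlinarith

lemma delay_deriv_pos (hfpos : ∀ z > 0, 0 < f z) (hfanti : AntitoneOn f (Ici xbar))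
    (hξ : 1 / 2 < ξ) (hr : 0 ≤ r) (hxpos : ∀ t ≥ (0:ℝ), 0 < x t)
    (hderiv : ∀ t ≥ (0:ℝ), HasDerivAt x (x' t) t) (hx'cont : ContinuousOn x' (Ici 0))
    (hdde : ∀ t ≥ r, x' t = 2 * ξ * f (x (t - r)) - f (x t)) (hx0 : xbar < x 0)
    (hinit : ∀ t ∈ Icc (0:ℝ) r, 0 < x' t) :
    ∀ t ≥ (0:ℝ), 0 < x' t := by
  refine forall_pos_of_pos_before hx'cont fun t ht hbefore => ?_
  rcases le_or_gt t r with htr | hrt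
  · exact hinit t ⟨ht, htr⟩
  have hmono : StrictMonoOn x (Icc 0 t) :=
    (convex_Icc 0 t).strictMonoOn_of_hasDerivAt_pos (fun s hs => hderiv s hs.1)
      fun s hs => hbefore s (Ioo_subset_Ico_self (by rwa [interior_Icc] at hs))
  have hlow : x 0 ≤ x (t - r) :=
    hmono.monotoneOn ⟨le_rfl, ht⟩ ⟨by linarith, by linarith⟩ (by linarith)
  have hle : x (t - r) ≤ x t :=
    hmono.monotoneOn ⟨by linarith, by linarith⟩ ⟨ht, le_rfl⟩ (by linarith)
  calc 0 < (2 * ξ - 1) * f (x t) := mul_pos (by linarith) (hfpos _ (hxpos t ht))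
    _ ≤ x' t := two_mul_sub_one_mul_le_of_delay hfanti (by linarith) (hdde t hrt.le)
        (hx0.le.trans hlow) hle

lemma delay_not_tendsto (hfpos : ∀ z > 0, 0 < f z) (hfanti : AntitoneOn f (Ici xbar))
    (hξ : 1 / 2 < ξ) (hr : 0 ≤ r) (hxpos : ∀ t ≥ (0:ℝ), 0 < x t)
    (hderiv : ∀ t ≥ (0:ℝ), HasDerivAt x (x' t) t)
    (hdde : ∀ t ≥ r, x' t = 2 * ξ * f (x (t - r)) - f (x t)) (hx0 : xbar < x 0)
    (hx'pos : ∀ t ≥ (0:ℝ), 0 < x' t) (C : ℝ) :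
    ¬ Tendsto x atTop (nhds C) := by
  intro hC
  have hmono : MonotoneOn x (Ici 0) :=
    ((convex_Ici 0).strictMonoOn_of_hasDerivAt_pos hderiv
      fun t ht => hx'pos t (interior_subset ht)).monotoneOn
  have hxC : ∀ t ≥ (0:ℝ), x t ≤ C := fun t ht =>
    ge_of_tendsto hC ((eventually_ge_atTop t).mono fun s hs => hmono ht (ht.trans hs) hs)
  have hxbar : ∀ t ≥ (0:ℝ), xbar ≤ x t := fun t ht => hx0.le.trans (hmono self_mem_Ici ht ht)
  have hslope : 0 < (2 * ξ - 1) * f C :=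
    mul_pos (by linarith) (hfpos C ((hxpos 0 le_rfl).trans_le (hxC 0 le_rfl)))
  refine not_tendsto_atTop_of_tendsto_nhds hC
    (tendsto_atTop_of_le_hasDerivAt hslope (fun t ht => hderiv t (hr.trans ht)) fun t ht => ?_)
  have ht0 : (0:ℝ) ≤ t := hr.trans ht
  calc (2 * ξ - 1) * f C ≤ (2 * ξ - 1) * f (x t) :=
        mul_le_mul_of_nonneg_left (hfanti (hxbar t ht0) ((hxbar t ht0).trans (hxC t ht0))
          (hxC t ht0)) (by linarith)
    _ ≤ x' t := two_mul_sub_one_mul_le_of_delay hfanti (by linarith) (hdde t ht)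
        (hxbar _ (by linarith)) (hmono (mem_Ici.2 (by linarith)) ht0 (by linarith))

end DelayEquation

theorem delay_equation_unbounded_general
    (β : ℝ → ℝ)
    (hβpos : ∀ z ∈ Ici (0:ℝ), 0 < β z)
    (f : ℝ → ℝ) (hf : ∀ z, f z = β z * z)
    (xbar : ℝ)
    (hfanti : AntitoneOn f (Ici xbar))
    (ξ r : ℝ) (hξ : 1 / 2 < ξ) (hr : 0 < r)
    (x x' : ℝ → ℝ)
    (hxpos : ∀ t ≥ (0:ℝ), 0 < x t)
    (hderiv : ∀ t ≥ (0:ℝ), HasDerivAt x (x' t) t)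
    (hx'cont : ContinuousOn x' (Ici 0))
    (hdde : ∀ t ≥ r, x' t = 2 * ξ * f (x (t - r)) - f (x t))
    (hx0 : xbar < x 0)
    (hinit : ∀ t ∈ Icc (0:ℝ) r, 0 < x' t) :
    (∀ t ≥ (0:ℝ), 0 < x' t) ∧ ¬ ∃ C : ℝ, Tendsto x atTop (nhds C) := by
  have hfpos : ∀ z > 0, 0 < f z := fun z hz => (hf z).symm ▸ mul_pos (hβpos z hz.le) hz
  have hx'pos := delay_deriv_pos hfpos hfanti hξ hr.le hxpos hderiv hx'cont hdde hx0 hinit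
  refine ⟨hx'pos, ?_⟩
  rintro ⟨C, hC⟩
  exact delay_not_tendsto hfpos hfanti hξ hr.le hxpos hderiv hdde hx0 hx'pos C hC

/-- unbounded solutions when ρ = 0: with `f x = β x * x` decreasing on
`[x̄, ∞)`, `ξ̄ > 1/2`, a positive C¹ solution of
`x'(t) = 2 ξ̄ f(x(t−r)) − f(x t)` for `t ≥ r` with `x 0 > x̄` and `x' > 0` on `[0,r]`
satisfies `x' > 0` on `[0,∞)` and converges to no finite limit. -/
theorem delay_equation_unbounded
    (β : ℝ → ℝ)
    (hβcont : ContinuousOn β (Ici 0))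
    (hβpos : ∀ z ∈ Ici (0:ℝ), 0 < β z)
    (hβanti : AntitoneOn β (Ici 0))
    (hβlim : Tendsto β atTop (nhds 0))
    (f : ℝ → ℝ) (hf : ∀ z, f z = β z * z)
    (xbar : ℝ) (hxbar : 0 < xbar)
    (hfanti : AntitoneOn f (Ici xbar))
    (ξ r : ℝ) (hξ : 1 / 2 < ξ) (hr : 0 < r)
    (x x' : ℝ → ℝ)
    (hxpos : ∀ t ≥ (0:ℝ), 0 < x t)
    (hderiv : ∀ t ≥ (0:ℝ), HasDerivAt x (x' t) t)
    (hx'cont : ContinuousOn x' (Ici 0))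
    (hdde : ∀ t ≥ r, x' t = 2 * ξ * f (x (t - r)) - f (x t))
    (hx0 : xbar < x 0)
    (hinit : ∀ t ∈ Icc (0:ℝ) r, 0 < x' t) :
    (∀ t ≥ (0:ℝ), 0 < x' t) ∧ ¬ ∃ C : ℝ, Tendsto x atTop (nhds C) :=
  delay_equation_unbounded_general β hβpos f hf xbar hfanti ξ r hξ hr x x' hxpos hderiv hx'cont hdde
    hx0 hinit
end
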